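/- Let μ be the measure on ℝ² with density (e^{-x}/(2λ)) φ(λ + (y-x)/(2λ)) dx dy, λ > 0, and A₂ = {(x,y) : x > 0 or y > 0}. Then for t > 0, μ({(x,y) ∈ A₂ : y - x ≤ t}) = 2Φ(λ) - Φ(λ - t/(2λ)). -/

import Mathlib

open Real MeasureTheory

noncomputable def stdPhi (t : ℝ) : ℝ := (Real.sqrt (2 * Real.pi))⁻¹ * Real.exp (-t ^ 2 / 2)

noncomputable def stdPhiCDF (x : ℝ) : ℝ := ∫ t in Set.Iic x, stdPhi t

/-- Exponent measure of the bivariate Hüsler-Reiss distribution, with density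
`e^{-x}/(2λ) φ(λ + (y-x)/(2λ))` with respect to Lebesgue measure on ℝ². -/
noncomputable def HRexpMeasure (l : ℝ) : Measure (ℝ × ℝ) :=
  (volume : Measure (ℝ × ℝ)).withDensity
    (fun p => ENNReal.ofReal (Real.exp (-p.1) / (2 * l) * stdPhi (l + (p.2 - p.1) / (2 * l))))

/-!
In the coordinates `(x, z) = (x, y - x)` the density factorises as
`e^{-x} · φ(λ + z/(2λ))/(2λ)`, and the region becomes `{-max(0, z) < x, z ≤ t}`.
Integrating out `x` leaves `∫_{z ≤ t} e^{max(0, z)} φ(λ + z/(2λ))/(2λ) dz`. The part `z ≤ 0`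
is `Φ(λ)`; on `0 < z ≤ t`, completing the square gives `e^z φ(λ + z/(2λ)) = φ(λ - z/(2λ))`,
so that part is `Φ(λ) - Φ(λ - t/(2λ))`.
-/

open Set ProbabilityTheory
open scoped ENNReal

lemma stdPhi_eq_gaussianPDFReal : stdPhi = gaussianPDFReal 0 1 := by
  ext t
  simp [stdPhi, gaussianPDFReal]

@[fun_prop]
lemma measurable_stdPhi : Measurable stdPhi :=
  stdPhi_eq_gaussianPDFReal ▸ measurable_gaussianPDFReal 0 1

lemma stdPhi_nonneg (t : ℝ) : 0 ≤ stdPhi t := by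
  rw [stdPhi_eq_gaussianPDFReal]; exact gaussianPDFReal_nonneg 0 1 t

lemma integrable_stdPhi : Integrable stdPhi :=
  stdPhi_eq_gaussianPDFReal ▸ integrable_gaussianPDFReal 0 1

lemma stdPhiCDF_nonneg (x : ℝ) : 0 ≤ stdPhiCDF x :=
  setIntegral_nonneg measurableSet_Iic fun t _ => stdPhi_nonneg t

lemma stdPhiCDF_mono : Monotone stdPhiCDF := fun _ _ hab =>
  setIntegral_mono_set integrable_stdPhi.integrableOn (ae_of_all _ stdPhi_nonneg)
    (Iic_subset_Iic.2 hab).eventuallyLE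

lemma exp_mul_stdPhi_add_div {l : ℝ} (hl : l ≠ 0) (z : ℝ) :
    exp z * stdPhi (l + z / (2 * l)) = stdPhi (l - z / (2 * l)) := by
  rw [stdPhi, stdPhi, mul_left_comm, ← exp_add]
  congr 2
  field_simp
  ring

lemma integral_Iic_comp_add_div (f : ℝ → ℝ) {c : ℝ} (hc : 0 < c) (a b : ℝ) :
    ∫ z in Iic b, f (a + z / c) = c * ∫ u in Iic (a + b / c), f u := by
  have hind : ∀ z, (Iic b).indicator (fun z => f (a + z / c)) z
      = (fun w => (Iic (a + b / c)).indicator f (a + w)) (z / c) := by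
    intro z
    simp only [indicator, mem_Iic, add_le_add_iff_left, div_le_div_iff_of_pos_right hc]
  rw [← integral_indicator measurableSet_Iic, ← integral_indicator measurableSet_Iic,
    funext hind, Measure.integral_comp_div, integral_add_left_eq_self, abs_of_pos hc,
    smul_eq_mul]

lemma intervalIntegral_stdPhi (a b : ℝ) : ∫ z in a..b, stdPhi z = stdPhiCDF b - stdPhiCDF a :=
  (intervalIntegral.integral_Iic_sub_Iic integrable_stdPhi.integrableOn
    integrable_stdPhi.integrableOn).symm

lemma lintegral_Iic_stdPhi_add_div {c : ℝ} (hc : 0 < c) (a b : ℝ) :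
    ∫⁻ z in Iic b, ENNReal.ofReal (stdPhi (a + z / c) / c)
      = ENNReal.ofReal (stdPhiCDF (a + b / c)) := by
  have hint : Integrable fun z => stdPhi (a + z / c) / c :=
    ((integrable_stdPhi.comp_add_left a).comp_div hc.ne').div_const c
  rw [← ofReal_integral_eq_lintegral_ofReal hint.integrableOn
    (ae_of_all _ fun z => div_nonneg (stdPhi_nonneg _) hc.le), integral_div,
    integral_Iic_comp_add_div stdPhi hc, mul_div_cancel_left₀ _ hc.ne', stdPhiCDF]

lemma lintegral_Ioc_stdPhi_sub_div {c : ℝ} (hc : 0 < c) (a : ℝ) {b₁ b₂ : ℝ}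
    (hb : b₁ ≤ b₂) :
    ∫⁻ z in Ioc b₁ b₂, ENNReal.ofReal (stdPhi (a - z / c) / c)
      = ENNReal.ofReal (stdPhiCDF (a - b₁ / c) - stdPhiCDF (a - b₂ / c)) := by
  have hint : Integrable fun z => stdPhi (a - z / c) / c :=
    ((integrable_stdPhi.comp_sub_left a).comp_div hc.ne').div_const c
  rw [← ofReal_integral_eq_lintegral_ofReal hint.integrableOn
    (ae_of_all _ fun z => div_nonneg (stdPhi_nonneg _) hc.le), integral_div,
    ← intervalIntegral.integral_of_le hb, intervalIntegral.integral_comp_sub_div _ hc.ne',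
    intervalIntegral_stdPhi, smul_eq_mul, mul_div_cancel_left₀ _ hc.ne']

lemma lintegral_Ioi_ofReal_exp_neg (a : ℝ) :
    ∫⁻ x in Ioi a, ENNReal.ofReal (exp (-x)) = ENNReal.ofReal (exp (-a)) := by
  have hint : IntegrableOn (fun x => exp (-x)) (Ioi a) := by
    simpa using exp_neg_integrableOn_Ioi a one_pos
  rw [← ofReal_integral_eq_lintegral_ofReal hint (ae_of_all _ fun x => (exp_pos _).le),
    integral_exp_neg_Ioi]

lemma HRexpMeasure_apply (l : ℝ) (s : Set (ℝ × ℝ)) :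
    HRexpMeasure l s = ∫⁻ q in (fun q : ℝ × ℝ => (q.1, q.1 + q.2)) ⁻¹' s,
      ENNReal.ofReal (exp (-q.1)) * ENNReal.ofReal (stdPhi (l + q.2 / (2 * l)) / (2 * l)) := by
  rw [HRexpMeasure, withDensity_apply', Measure.volume_eq_prod,
    ← (measurePreserving_prod_add volume volume).setLIntegral_comp_preimage_emb
      (MeasurableEquiv.shearAddRight ℝ).measurableEmbedding]
  refine lintegral_congr fun q => ?_
  rw [← ENNReal.ofReal_mul (exp_pos _).le]
  simp only [add_sub_cancel_left]
  congr 1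
  ring

lemma neg_max_zero_lt_iff (x z : ℝ) : -max 0 z < x ↔ 0 < x ∨ 0 < x + z := by
  rw [neg_lt, lt_max_iff]
  constructor <;> rintro (h | h) <;> [left; right; left; right] <;> linarith

lemma setLIntegral_exp_neg_mul {g : ℝ → ℝ≥0∞} (hg : Measurable g) (t : ℝ) :
    ∫⁻ q in {q : ℝ × ℝ | (0 < q.1 ∨ 0 < q.1 + q.2) ∧ q.2 ≤ t},
        ENNReal.ofReal (exp (-q.1)) * g q.2
      = ∫⁻ z in Iic t, ENNReal.ofReal (exp (max 0 z)) * g z := by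
  have hA : MeasurableSet {q : ℝ × ℝ | (0 < q.1 ∨ 0 < q.1 + q.2) ∧ q.2 ≤ t} := by
    measurability
  rw [← lintegral_indicator hA, Measure.volume_eq_prod, lintegral_prod_symm _ (by fun_prop),
    ← lintegral_indicator measurableSet_Iic]
  congr 1 with z
  by_cases hz : z ≤ t
  · have hslice : (fun x => {q : ℝ × ℝ | (0 < q.1 ∨ 0 < q.1 + q.2) ∧ q.2 ≤ t}.indicator
          (fun q => ENNReal.ofReal (exp (-q.1)) * g q.2) (x, z))
        = (Ioi (-max 0 z)).indicator (fun x => ENNReal.ofReal (exp (-x)) * g z) := by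
      ext x
      simp [indicator, neg_max_zero_lt_iff, hz]
    rw [hslice, lintegral_indicator measurableSet_Ioi, lintegral_mul_const _ (by fun_prop),
      lintegral_Ioi_ofReal_exp_neg, neg_neg, indicator_of_mem (mem_Iic.2 hz)]
  · rw [indicator_of_notMem (by simpa using hz)]
    simp [indicator, hz]

lemma lintegral_Iic_exp_max_zero_mul_stdPhi {l : ℝ} (hl : 0 < l) {t : ℝ} (ht : 0 ≤ t) :
    ∫⁻ z in Iic t, ENNReal.ofReal (exp (max 0 z)) *
        ENNReal.ofReal (stdPhi (l + z / (2 * l)) / (2 * l))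
      = ENNReal.ofReal (stdPhiCDF l) +
          ENNReal.ofReal (stdPhiCDF l - stdPhiCDF (l - t / (2 * l))) := by
  have h2l : 0 < 2 * l := by positivity
  have hflat : EqOn (fun z => ENNReal.ofReal (exp (max 0 z)) *
        ENNReal.ofReal (stdPhi (l + z / (2 * l)) / (2 * l)))
      (fun z => ENNReal.ofReal (stdPhi (l + z / (2 * l)) / (2 * l))) (Iic 0) := fun z hz => by
    simp [max_eq_left (mem_Iic.1 hz)]
  have htilt : EqOn (fun z => ENNReal.ofReal (exp (max 0 z)) *
        ENNReal.ofReal (stdPhi (l + z / (2 * l)) / (2 * l)))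
      (fun z => ENNReal.ofReal (stdPhi (l - z / (2 * l)) / (2 * l))) (Ioc 0 t) := fun z hz => by
    simp only [max_eq_right hz.1.le, ← ENNReal.ofReal_mul (exp_pos _).le, mul_div_assoc',
      exp_mul_stdPhi_add_div hl.ne']
  rw [← Iic_union_Ioc_eq_Iic ht, lintegral_union measurableSet_Ioc (Iic_disjoint_Ioc le_rfl),
    setLIntegral_congr_fun measurableSet_Iic hflat,
    setLIntegral_congr_fun measurableSet_Ioc htilt,
    lintegral_Iic_stdPhi_add_div h2l, lintegral_Ioc_stdPhi_sub_div h2l _ ht]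
  simp

/-- Exponent measure of increments at most `t > 0` within the region where at least
one coordinate is positive. -/
theorem HRexpMeasure_increment_pos (l : ℝ) (hl : 0 < l) (t : ℝ) (ht : 0 < t) :
    HRexpMeasure l {p : ℝ × ℝ | (0 < p.1 ∨ 0 < p.2) ∧ p.2 - p.1 ≤ t} =
      ENNReal.ofReal (2 * stdPhiCDF l - stdPhiCDF (l - t / (2 * l))) := by
  have hshear : (fun q : ℝ × ℝ => (q.1, q.1 + q.2)) ⁻¹'
        {p : ℝ × ℝ | (0 < p.1 ∨ 0 < p.2) ∧ p.2 - p.1 ≤ t}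
      = {q : ℝ × ℝ | (0 < q.1 ∨ 0 < q.1 + q.2) ∧ q.2 ≤ t} := by
    ext q
    simp only [mem_preimage, mem_ofPred_eq, add_sub_cancel_left]
  have hmono : stdPhiCDF (l - t / (2 * l)) ≤ stdPhiCDF l :=
    stdPhiCDF_mono (sub_le_self l (by positivity))
  rw [HRexpMeasure_apply, hshear,
    setLIntegral_exp_neg_mul (g := fun z => ENNReal.ofReal (stdPhi (l + z / (2 * l)) / (2 * l)))
      (by fun_prop),
    lintegral_Iic_exp_max_zero_mul_stdPhi hl ht.le,
    ← ENNReal.ofReal_add (stdPhiCDF_nonneg l) (sub_nonneg.2 hmono)]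
  congr 1
  ring
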